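/- arXiv:1601.04906 — 4 statements merged into one kernel-verified Lean document; each statement's English description precedes it below -/
import Mathlib

section
/- Let u : ℝ → ℝ be a C¹ 2π-periodic nonconstant function, and assume that for every point a with u'(a) = 0 one has u(2a − x) = u(x) for all x. Then the set {a ∈ [0, 2π) : u'(a) = 0} is finite. -/
/-!
If `u` is symmetric about two critical points `a` and `c`, composing the two reflections
shows that `2 * (a - c)` is a period of `u`. The periods of a continuous nonconstant function
on `ℝ` form a closed subgroup that is not dense, hence a cyclic one `ℤ g`; so all critical
points lie in `b + ℤ (g / 2)` for any one of them `b`, which meets `[0, 2π)` in a finite set.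
-/

open Set Function Bornology

def periods {G β : Type*} [AddGroup G] (f : G → β) : AddSubgroup G where
  carrier := {c | Periodic f c}
  zero_mem' := fun x => by rw [add_zero]
  add_mem' := Periodic.add_period
  neg_mem' := Periodic.neg

section Periods

variable {G β : Type*} [AddGroup G] {f : G → β}

@[simp] lemma mem_periods {c : G} : c ∈ periods f ↔ Periodic f c := Iff.rfl

variable [TopologicalSpace G] [TopologicalSpace β]

lemma isClosed_periods [ContinuousAdd G] [T2Space β] (hf : Continuous f) :
    IsClosed (periods f : Set G) := by
  have hInter : (periods f : Set G) = ⋂ x, {c | f (x + c) = f x} := by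
    ext c; simp [Periodic]
  rw [hInter]
  exact isClosed_iInter fun x => isClosed_eq (by fun_prop) continuous_const

lemma apply_eq_of_dense_periods [ContinuousAdd G] [T2Space β] (hf : Continuous f)
    (hd : Dense (periods f : Set G)) (x y : G) : f x = f y := by
  have hmem : -y + x ∈ periods f := (isClosed_periods hf).closure_subset (hd (-y + x))
  simpa using mem_periods.mp hmem y

end Periods

lemma exists_periods_eq_zmultiples {β : Type*} [TopologicalSpace β] [T2Space β] {f : ℝ → β}
    (hf : Continuous f) (hnc : ∃ x y, f x ≠ f y) :
    ∃ g, periods f = AddSubgroup.zmultiples g := by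
  obtain ⟨x, y, hxy⟩ := hnc
  rcases AddSubgroup.dense_or_cyclic (periods f) with hd | ⟨g, hg⟩
  · exact absurd (apply_eq_of_dense_periods hf hd x y) hxy
  · exact ⟨g, by rw [hg, AddSubgroup.zmultiples_eq_closure]⟩

lemma periodic_two_mul_sub_of_symmetric {R β : Type*} [CommRing R] {f : R → β} {a c : R}
    (ha : ∀ x, f (2 * a - x) = f x) (hc : ∀ x, f (2 * c - x) = f x) :
    Periodic f (2 * (a - c)) := fun x => by
  calc f (x + 2 * (a - c)) = f (2 * a - (2 * c - x)) := by ring_nf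
    _ = f x := by rw [ha, hc]

lemma Set.Finite.of_two_mul_sub_mem_zmultiples {S : Set ℝ} (hS : IsBounded S) {b g : ℝ}
    (h : ∀ a ∈ S, 2 * (a - b) ∈ AddSubgroup.zmultiples g) : S.Finite := by
  set φ : ℝ → ℝ := fun a => 2 * (a - b)
  have hφ : Injective φ := fun a a' hφa => by simp only [φ] at hφa; linarith
  have hlip : LipschitzWith 2 φ := by
    refine LipschitzWith.of_dist_le_mul fun a a' => ?_
    simp only [φ, Real.dist_eq, NNReal.coe_ofNat]
    rw [show 2 * (a - b) - 2 * (a' - b) = 2 * (a - a') by ring, abs_mul, abs_two]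
  refine Finite.of_finite_image ?_ hφ.injOn
  refine (Metric.finite_isBounded_inter_isClosed (s := (AddSubgroup.zmultiples g : Set ℝ))
    (SetLike.isDiscrete_iff_discreteTopology.mpr inferInstance)
    (hlip.isBounded_image hS) AddSubgroup.isClosed_of_discrete).subset ?_
  rintro _ ⟨a, ha, rfl⟩
  exact ⟨mem_image_of_mem φ ha, h a ha⟩

theorem stmt_2_general (u : ℝ → ℝ) (hu : ContDiff ℝ 1 u)
    (hnc : ∃ x y, u x ≠ u y)
    (hrefl : ∀ a, deriv u a = 0 → ∀ x, u (2 * a - x) = u x) :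
    {a ∈ Set.Ico (0 : ℝ) (2 * Real.pi) | deriv u a = 0}.Finite := by
  obtain ⟨g, hg⟩ := exists_periods_eq_zmultiples hu.continuous hnc
  rcases Set.eq_empty_or_nonempty {a ∈ Set.Ico (0 : ℝ) (2 * Real.pi) | deriv u a = 0}
    with hS | ⟨b, hb⟩
  · rw [hS]; exact finite_empty
  refine Set.Finite.of_two_mul_sub_mem_zmultiples (b := b) (g := g)
    (Metric.isBounded_Ico 0 (2 * Real.pi) |>.subset (sep_subset _ _)) fun a ha => ?_
  rw [← hg]
  exact periodic_two_mul_sub_of_symmetric (hrefl a ha.2) (hrefl b hb.2)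

theorem stmt_2 (u : ℝ → ℝ) (hu : ContDiff ℝ 1 u)
    (hper : ∀ x, u (x + 2 * Real.pi) = u x)
    (hnc : ∃ x y, u x ≠ u y)
    (hrefl : ∀ a, deriv u a = 0 → ∀ x, u (2 * a - x) = u x) :
    {a ∈ Set.Ico (0 : ℝ) (2 * Real.pi) | deriv u a = 0}.Finite :=
  stmt_2_general u hu hnc hrefl
end

section
/- Define ψ : ℝ → ℝ by ψ(t) = exp(∑_{k=1}^∞ (cos(2^{−k} π t) − 1)). Then for every natural number n ≥ 1, ψ(2ⁿ) ≥ exp(−2π − 2). -/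
/-!
At `t = 2ⁿ` the `k`-th term of the series is `cos (2^(n-1-k) π) - 1`: it vanishes for `k < n - 1`,
equals `-2` for `k = n - 1`, and for `k ≥ n` it is `cos (x / 2^j) - 1` with `x = π / 2`, which
`cos y ≥ 1 - y² / 2` bounds below by a geometric series summing to `-π² / 6 ≥ -2π`.
-/

open Real Finset

lemma neg_sq_div_two_mul_quarter_pow_le_cos_div_two_pow_sub_one (x : ℝ) (k : ℕ) :
    -(x ^ 2 / 2) * (1 / 4) ^ k ≤ cos (x / 2 ^ k) - 1 := by
  have h : (x / 2 ^ k) ^ 2 = x ^ 2 * (1 / 4) ^ k := by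
    rw [div_pow, one_div_pow, mul_one_div, ← pow_mul, mul_comm k, pow_mul]
    norm_num
  linarith [one_sub_sq_div_two_le_cos (x := x / 2 ^ k)]

lemma summable_cos_div_two_pow_sub_one (x : ℝ) :
    Summable fun k : ℕ => cos (x / 2 ^ k) - 1 := by
  refine (Summable.of_nonneg_of_le (fun k => ?_) (fun k => ?_)
    ((summable_geometric_of_lt_one (by norm_num) (by norm_num : (1 / 4 : ℝ) < 1)).mul_left
      (x ^ 2 / 2))).neg.congr fun k => neg_neg _
  · linarith [cos_le_one (x / 2 ^ k)]
  · linarith [neg_sq_div_two_mul_quarter_pow_le_cos_div_two_pow_sub_one x k]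

lemma neg_two_mul_sq_div_three_le_tsum_cos_div_two_pow_sub_one (x : ℝ) :
    -(2 * x ^ 2 / 3) ≤ ∑' k : ℕ, (cos (x / 2 ^ k) - 1) := by
  calc -(2 * x ^ 2 / 3) = ∑' k : ℕ, -(x ^ 2 / 2) * (1 / 4 : ℝ) ^ k := by
        rw [tsum_mul_left, tsum_geometric_of_lt_one (by norm_num) (by norm_num)]
        ring
    _ ≤ _ := Summable.tsum_le_tsum (neg_sq_div_two_mul_quarter_pow_le_cos_div_two_pow_sub_one x)
        ((summable_geometric_of_lt_one (by norm_num) (by norm_num)).mul_left _)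
        (summable_cos_div_two_pow_sub_one x)

lemma cos_two_pow_succ_mul_pi (i : ℕ) : cos (2 ^ (i + 1) * π) = 1 := by
  simpa [pow_succ, mul_assoc] using cos_nat_mul_two_pi (2 ^ i)

lemma sum_range_succ_cos_two_pow_mul_pi_sub_one (m : ℕ) :
    ∑ k ∈ range (m + 1), (cos (2 ^ (m - k) * π) - 1) = -2 := by
  rw [sum_range_succ, Nat.sub_self, pow_zero, one_mul, cos_pi, sum_eq_zero fun k hk => ?_]
  · norm_num
  · rw [mem_range] at hk
    rw [show m - k = m - k - 1 + 1 by omega, cos_two_pow_succ_mul_pi, sub_self]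

lemma two_zpow_neg_succ_mul_two_pow (k n : ℕ) :
    (2 : ℝ) ^ (-((k : ℤ) + 1)) * 2 ^ n = 2 ^ ((n : ℤ) - k - 1) := by
  rw [← zpow_natCast, ← zpow_add₀ two_ne_zero]
  ring_nf

theorem stmt_11 (ψ : ℝ → ℝ)
    (hψ : ∀ t, ψ t =
      Real.exp (∑' k : ℕ, (Real.cos (2 ^ (-((k : ℤ) + 1)) * Real.pi * t) - 1))) :
    ∀ n : ℕ, 1 ≤ n → ψ (2 ^ n) ≥ Real.exp (-2 * Real.pi - 2) := by
  intro n hn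
  obtain ⟨m, rfl⟩ : ∃ m, n = m + 1 := ⟨n - 1, by omega⟩
  set f : ℕ → ℝ := fun k => cos (2 ^ (-((k : ℤ) + 1)) * π * 2 ^ (m + 1)) - 1
  have hf_head : ∀ k ∈ range (m + 1), f k = cos (2 ^ (m - k) * π) - 1 := by
    intro k hk
    rw [mem_range] at hk
    simp only [f, mul_right_comm _ π, two_zpow_neg_succ_mul_two_pow,
      show ((m + 1 : ℕ) : ℤ) - k - 1 = ((m - k : ℕ) : ℤ) by omega, zpow_natCast]
  have hf_tail : ∀ j, f (j + (m + 1)) = cos (π / 2 / 2 ^ j) - 1 := by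
    intro j
    simp only [f]
    rw [mul_right_comm, two_zpow_neg_succ_mul_two_pow,
      show ((m + 1 : ℕ) : ℤ) - ((j + (m + 1) : ℕ) : ℤ) - 1 = -((j : ℤ) + 1) by omega,
      zpow_neg, zpow_add_one₀ two_ne_zero, zpow_natCast]
    ring_nf
  have hf : Summable f := (summable_nat_add_iff (m + 1)).mp <| by
    simpa only [hf_tail] using summable_cos_div_two_pow_sub_one (π / 2)
  rw [hψ, ge_iff_le, exp_le_exp, ← hf.sum_add_tsum_nat_add (m + 1), sum_congr rfl hf_head,
    sum_range_succ_cos_two_pow_mul_pi_sub_one, tsum_congr hf_tail]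
  nlinarith [neg_two_mul_sq_div_three_le_tsum_cos_div_two_pow_sub_one (π / 2), pi_le_four, pi_pos]
end

section
/- Let f(t) = −∑_{k=1}^∞ 2^{−k} π sin(2^{−k} π t). Then (1/t) ∫₀ᵗ f(s) ds → 0 as |t| → ∞. -/
/-!
Integrating term by term, `∫₀ᵗ f = -∑ₖ (1 - cos (aₖ t))` with `aₖ = 2^{-(k+1)} π`. Each term lies
in `[0, min 2 (aₖ |t|)]`, so bounding the first `N` terms by `2` and the rest by `aₖ |t|` gives
`|∫₀ᵗ f| ≤ 2N + (∑_{k ≥ N} aₖ) |t|`. Since the tails of `∑ aₖ` tend to zero, the integral is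
`o(t)` as `|t| → ∞`.
-/

open Real Filter Topology Asymptotics

lemma one_sub_cos_mul_le (α t : ℝ) : 1 - cos (α * t) ≤ |α| * |t| := by
  simpa [abs_mul] using (le_abs_self _).trans (abs_cos_sub_cos_le 0 (α * t))

lemma integral_mul_sin_mul (a t : ℝ) : ∫ s in (0:ℝ)..t, a * sin (a * s) = 1 - cos (a * t) := by
  simp [intervalIntegral.integral_const_mul, intervalIntegral.mul_integral_comp_mul_left]

section SumOfCosines

variable {a : ℕ → ℝ}

lemma summable_one_sub_cos_mul (ha : Summable a) (t : ℝ) :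
    Summable fun k => 1 - cos (a k * t) :=
  ha.abs.mul_right |t| |>.of_nonneg_of_le (fun _ => sub_nonneg.2 (cos_le_one _))
    fun k => one_sub_cos_mul_le (a k) t

lemma tsum_one_sub_cos_mul_le (ha : Summable a) (t : ℝ) (N : ℕ) :
    ∑' k, (1 - cos (a k * t)) ≤ 2 * N + (∑' k, |a (k + N)|) * |t| := by
  have hs := summable_one_sub_cos_mul ha t
  rw [← hs.sum_add_tsum_nat_add N]
  have head : ∑ k ∈ Finset.range N, (1 - cos (a k * t)) ≤ 2 * N := by
    calc ∑ k ∈ Finset.range N, (1 - cos (a k * t)) ≤ ∑ _k ∈ Finset.range N, (2:ℝ) :=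
          Finset.sum_le_sum fun k _ => by linarith [neg_one_le_cos (a k * t)]
      _ = 2 * N := by simp [mul_comm]
  have tail : ∑' k, (1 - cos (a (k + N) * t)) ≤ (∑' k, |a (k + N)|) * |t| := by
    rw [← tsum_mul_right]
    exact ((summable_nat_add_iff N).2 hs).tsum_le_tsum (fun k => one_sub_cos_mul_le _ t)
      (((summable_nat_add_iff N).2 ha.abs).mul_right _)
  linarith

lemma isLittleO_tsum_one_sub_cos_mul (ha : Summable a) :
    (fun t => ∑' k, (1 - cos (a k * t))) =o[cocompact ℝ] id := by
  rw [isLittleO_iff]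
  intro c hc
  obtain ⟨N, hN⟩ : ∃ N : ℕ, ∑' k, |a (k + N)| < c / 2 :=
    ((tendsto_sum_nat_add fun k => |a k|).eventually (gt_mem_nhds (half_pos hc))).exists
  filter_upwards [tendsto_norm_cocompact_atTop.eventually (eventually_ge_atTop (4 * N / c))]
    with t ht
  rw [div_le_iff₀ hc, Real.norm_eq_abs] at ht
  have hnonneg : 0 ≤ ∑' k, (1 - cos (a k * t)) := tsum_nonneg fun _ => sub_nonneg.2 (cos_le_one _)
  rw [Real.norm_of_nonneg hnonneg, id, Real.norm_eq_abs]
  calc ∑' k, (1 - cos (a k * t)) ≤ 2 * N + (∑' k, |a (k + N)|) * |t| :=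
        tsum_one_sub_cos_mul_le ha t N
    _ ≤ c / 2 * |t| + c / 2 * |t| :=
        add_le_add (by linarith) (mul_le_mul_of_nonneg_right hN.le (abs_nonneg t))
    _ = c * |t| := by ring

lemma integral_tsum_mul_sin_mul (ha : Summable a) (t : ℝ) :
    ∫ s in (0:ℝ)..t, ∑' k, a k * sin (a k * s) = ∑' k, (1 - cos (a k * t)) := by
  let g (k : ℕ) : C(ℝ, ℝ) := ⟨fun s => a k * sin (a k * s), by fun_prop⟩
  have hg : Summable fun k =>
      ‖(g k).restrict (⟨Set.uIcc 0 t, isCompact_uIcc⟩ : TopologicalSpace.Compacts ℝ)‖ := by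
    refine ha.abs.of_nonneg_of_le (fun _ => norm_nonneg _) fun k => ?_
    refine ((g k).restrict _).norm_le (abs_nonneg _) |>.2 fun s => ?_
    simpa [g, abs_mul] using mul_le_of_le_one_right (abs_nonneg (a k)) (abs_sin_le_one _)
  calc ∫ s in (0:ℝ)..t, ∑' k, a k * sin (a k * s) = ∑' k, ∫ s in (0:ℝ)..t, g k s :=
        (intervalIntegral.tsum_intervalIntegral_eq_of_summable_norm hg).symm
    _ = ∑' k, (1 - cos (a k * t)) := tsum_congr fun k => integral_mul_sin_mul (a k) t

end SumOfCosines

lemma summable_two_zpow_neg_succ_mul (c : ℝ) :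
    Summable fun k : ℕ => (2:ℝ) ^ (-((k : ℤ) + 1)) * c := by
  refine (summable_geometric_two.mul_right (c / 2)).congr fun k => ?_
  rw [zpow_neg, zpow_add₀ two_ne_zero, zpow_natCast]
  simp only [zpow_one, mul_inv, one_div, inv_pow]
  ring

theorem stmt_14 (f : ℝ → ℝ)
    (hf : ∀ t, f t = -∑' k : ℕ,
      2 ^ (-((k : ℤ) + 1)) * Real.pi * Real.sin (2 ^ (-((k : ℤ) + 1)) * Real.pi * t)) :
    Filter.Tendsto (fun t : ℝ => (1 / t) * ∫ s in (0:ℝ)..t, f s)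
      Filter.atTop (nhds 0) ∧
    Filter.Tendsto (fun t : ℝ => (1 / t) * ∫ s in (0:ℝ)..t, f s)
      Filter.atBot (nhds 0) := by
  have ha := summable_two_zpow_neg_succ_mul π
  have hint (t : ℝ) : ∫ s in (0:ℝ)..t, f s =
      -∑' k : ℕ, (1 - cos (2 ^ (-((k : ℤ) + 1)) * π * t)) := by
    simp_rw [hf, intervalIntegral.integral_neg, integral_tsum_mul_sin_mul ha]
  have hlim : Tendsto (fun t : ℝ => (1 / t) * ∫ s in (0:ℝ)..t, f s) (cocompact ℝ) (𝓝 0) := by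
    refine (isLittleO_tsum_one_sub_cos_mul ha).neg_left.tendsto_div_nhds_zero.congr fun t => ?_
    simp only [hint, id, one_div_mul_eq_div]
  rw [cocompact_eq_atBot_atTop, tendsto_sup] at hlim
  exact hlim.symm
end

section
/- Let (Y, d) be a compact metric space with a continuous flow σ : Y × ℝ → Y. Suppose the flow is distal, i.e., for every pair y₁ ≠ y₂ there is δ > 0 with d(σ(y₁,t), σ(y₂,t)) > δ for all t ∈ ℝ. Let K ⊆ X × Y be a compact invariant set for a flow Π on X × Y whose second coordinate is σ, assume Π restricted to K is distal, Y is minimal under σ, K is minimal under Π, and the projection p : K → Y is surjective. If p⁻¹(y₀) ∩ K is a singleton for some y₀ ∈ Y, then p⁻¹(y) ∩ K is a singleton for every y ∈ Y. -/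
/-!
Let `p ≠ q` be two points of `K` over the same base point `y`. Since `Y` is minimal, the orbit
of `y` accumulates at the base point `y₀` whose fiber is a single point. Following the pair
`(p, q)` along the times that bring `y` close to `y₀`, compactness of `K × K` yields a limit pair
over `y₀`, which must lie on the diagonal. So `p` and `q` are proximal, contradicting distality.
-/

open Set

theorem denseRange_of_minimal {Y T : Type*} [TopologicalSpace Y] [Add T] [Nonempty T]
    (σ : Y → T → Y) (hσcont : ∀ t, Continuous fun y => σ y t)
    (hσadd : ∀ y s t, σ (σ y s) t = σ y (s + t))
    (hYmin : ∀ S : Set Y, IsClosed S → S.Nonempty → (∀ y ∈ S, ∀ t, σ y t ∈ S) → S = univ)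
    (y : Y) : DenseRange (σ y) := by
  have hinv : ∀ z ∈ closure (range (σ y)), ∀ t, σ z t ∈ closure (range (σ y)) := by
    intro z hz t
    refine map_mem_closure (f := fun w => σ w t) (hσcont t) hz ?_
    rintro _ ⟨s, rfl⟩
    exact ⟨s + t, (hσadd y s t).symm⟩
  exact dense_iff_closure_eq.2 (hYmin _ isClosed_closure (range_nonempty _).closure hinv)

section Factor

variable {Z Y T : Type*} [TopologicalSpace Y] [T2Space Y]
  {σ : Y → T → Y} {Phi : Z → T → Z} {π : Z → Y}

theorem closure_range_subset_image_closure_range [TopologicalSpace Z] [R1Space Z]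
    (hπ : Continuous π) (hπPhi : ∀ p t, π (Phi p t) = σ (π p) t)
    {K : Set Z} (hK : IsCompact K) (hKinv : ∀ p ∈ K, ∀ t, Phi p t ∈ K) {p : Z} (hp : p ∈ K) :
    closure (range (σ (π p))) ⊆ π '' closure (range (Phi p)) := by
  have hcpt : IsCompact (closure (range (Phi p))) :=
    hK.closure_of_subset (range_subset_iff.2 (hKinv p hp))
  refine closure_minimal ?_ (hcpt.image hπ).isClosed
  rintro _ ⟨t, rfl⟩
  exact ⟨Phi p t, subset_closure ⟨t, rfl⟩, hπPhi p t⟩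

theorem exists_dist_le_of_subsingleton_fiber [MetricSpace Z]
    (hπ : Continuous π) (hπPhi : ∀ p t, π (Phi p t) = σ (π p) t)
    {K : Set Z} (hK : IsCompact K) (hKinv : ∀ p ∈ K, ∀ t, Phi p t ∈ K)
    {y₀ : Y} (hfib : {p ∈ K | π p = y₀}.Subsingleton)
    {p q : Z} (hp : p ∈ K) (hq : q ∈ K) (hpq : π p = π q)
    (hy₀ : y₀ ∈ closure (range (σ (π p)))) {δ : ℝ} (hδ : 0 < δ) :
    ∃ t, dist (Phi p t) (Phi q t) ≤ δ := by
  obtain ⟨r, hr, hr₁⟩ := closure_range_subset_image_closure_range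
    (Phi := fun r t => (Phi r.1 t, Phi r.2 t)) (π := fun r => π r.1)
    (hπ.comp continuous_fst) (fun r t => hπPhi r.1 t) (hK.prod hK)
    (fun r hr t => ⟨hKinv _ hr.1 t, hKinv _ hr.2 t⟩) (mk_mem_prod hp hq) hy₀
  have hrK : r ∈ K ×ˢ K :=
    closure_minimal (t := K ×ˢ K) (range_subset_iff.2 fun t => ⟨hKinv p hp t, hKinv q hq t⟩)
      (hK.prod hK).isClosed hr
  have hr₂ : π r.2 = π r.1 := by
    refine closure_minimal (t := {r | π r.2 = π r.1}) ?_
      (isClosed_eq (by fun_prop) (by fun_prop)) hr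
    rintro _ ⟨t, rfl⟩
    simp only [mem_ofPred_eq, hπPhi, hpq]
  have hdiag : r.1 = r.2 := hfib ⟨hrK.1, hr₁⟩ ⟨hrK.2, hr₂.trans hr₁⟩
  by_contra! hfar
  have hfar' : δ ≤ dist r.1 r.2 := by
    refine closure_minimal (t := {r | δ ≤ dist r.1 r.2}) ?_
      (isClosed_le continuous_const (by fun_prop)) hr
    rintro _ ⟨t, rfl⟩
    exact (hfar t).le
  rw [hdiag, dist_self] at hfar'
  linarith

end Factor

theorem stmt_16_general {X Y : Type*} [MetricSpace X] [MetricSpace Y]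
    (σ : Y → ℝ → Y)
    (hσcont : Continuous fun p : Y × ℝ => σ p.1 p.2)
    (hσadd : ∀ y s t, σ (σ y s) t = σ y (s + t))
    (Phi : X × Y → ℝ → X × Y)
    (hPhisnd : ∀ p t, (Phi p t).2 = σ p.2 t)
    (K : Set (X × Y)) (hKcpt : IsCompact K)
    (hKinv : ∀ p ∈ K, ∀ t, Phi p t ∈ K)
    (hKdistal : ∀ p ∈ K, ∀ q ∈ K, p ≠ q →
      ∃ δ > (0:ℝ), ∀ t, dist (Phi p t) (Phi q t) > δ)
    (hYmin : ∀ S : Set Y, IsClosed S → S.Nonempty → (∀ y ∈ S, ∀ t, σ y t ∈ S) →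
      S = Set.univ)
    (hsurj : ∀ y : Y, ∃ x : X, (x, y) ∈ K)
    (hone : ∃ y₀ : Y, ∃ x₀ : X, {p ∈ K | p.2 = y₀} = {(x₀, y₀)}) :
    ∀ y : Y, ∃ x : X, {p ∈ K | p.2 = y} = {(x, y)} := by
  obtain ⟨y₀, x₀, hfib⟩ := hone
  have hdense := denseRange_of_minimal σ (fun t => by fun_prop) hσadd hYmin
  intro y
  obtain ⟨x, hx⟩ := hsurj y
  refine ⟨x, eq_singleton_iff_unique_mem.2 ⟨⟨hx, rfl⟩, fun r ⟨hr, hry⟩ => ?_⟩⟩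
  by_contra hne
  obtain ⟨δ, hδ, hfar⟩ := hKdistal r hr (x, y) hx hne
  obtain ⟨t, ht⟩ := exists_dist_le_of_subsingleton_fiber continuous_snd hPhisnd hKcpt hKinv
    (hfib ▸ subsingleton_singleton) hr hx hry (hdense r.2 y₀) hδ
  exact (hfar t).not_ge ht

theorem stmt_16 {X Y : Type*} [MetricSpace X] [MetricSpace Y]
    [CompactSpace Y]
    (σ : Y → ℝ → Y)
    (hσcont : Continuous fun p : Y × ℝ => σ p.1 p.2)
    (hσ0 : ∀ y, σ y 0 = y)
    (hσadd : ∀ y s t, σ (σ y s) t = σ y (s + t))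
    (hσdistal : ∀ y₁ y₂ : Y, y₁ ≠ y₂ → ∃ δ > (0:ℝ), ∀ t, dist (σ y₁ t) (σ y₂ t) > δ)
    (Phi : X × Y → ℝ → X × Y)
    (hPhisnd : ∀ p t, (Phi p t).2 = σ p.2 t)
    (hPhi0 : ∀ p, Phi p 0 = p)
    (hPhiadd : ∀ p s t, Phi (Phi p s) t = Phi p (s + t))
    (hPhicont : Continuous fun q : (X × Y) × ℝ => Phi q.1 q.2)
    (K : Set (X × Y)) (hKcpt : IsCompact K)
    (hKinv : ∀ p ∈ K, ∀ t, Phi p t ∈ K)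
    (hKdistal : ∀ p ∈ K, ∀ q ∈ K, p ≠ q →
      ∃ δ > (0:ℝ), ∀ t, dist (Phi p t) (Phi q t) > δ)
    (hYmin : ∀ S : Set Y, IsClosed S → S.Nonempty → (∀ y ∈ S, ∀ t, σ y t ∈ S) →
      S = Set.univ)
    (hKmin : ∀ S : Set (X × Y), S ⊆ K → IsClosed S → S.Nonempty →
      (∀ p ∈ S, ∀ t, Phi p t ∈ S) → S = K)
    (hsurj : ∀ y : Y, ∃ x : X, (x, y) ∈ K)
    (hone : ∃ y₀ : Y, ∃ x₀ : X, {p ∈ K | p.2 = y₀} = {(x₀, y₀)}) :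
    ∀ y : Y, ∃ x : X, {p ∈ K | p.2 = y} = {(x, y)} :=
  stmt_16_general σ hσcont hσadd Phi hPhisnd K hKcpt hKinv hKdistal hYmin hsurj hone
end
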